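/- For the recursively defined monomial sets B(k_1,…,k_N) (B() = {1}, B(k_1,…,k_N) = sh(B(k_1,…,k_{N−1})) ∪ f_0·B(k_1,…,k_N−1), with the final entry dropped when it reaches 0 and re-sorted nondecreasingly), the union in the recursion is disjoint and the cardinality satisfies |B(k_1,…,k_N)| = ∏_{i=1}^N (k_i + 1). -/

import Mathlib

/-!
Every monomial in `sh B(…)` has `f_0`-exponent `0`, every monomial in `f_0 · B(…)` has
`f_0`-exponent at least `1`, so the union in the recursion is disjoint. Both `sh` and
multiplication by `f_0` are injective, so `|B(k_1,…,k_N)| = |B(k_1,…,k_{N-1})| + |B(k_1,…,k_N - 1)|`,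
and induction on `∑ kᵢ + N` gives `(k_N + 1) ∏_{i<N} (k_i + 1)`.
-/

/-- Monomials in the free commutative monoid on generators `f_0, f_1, f_2, …` are
finitely supported exponent vectors `ℕ →₀ ℕ`; `f_i` is `Finsupp.single i 1` and the
monoid operation is addition of exponents. -/
noncomputable def shMon : (ℕ →₀ ℕ) → (ℕ →₀ ℕ) :=
  Finsupp.mapDomain (· + 1)

/-- Re-sort a list of natural numbers in nonincreasing order. -/
def sortDesc (l : List ℕ) : List ℕ :=
  l.insertionSort (fun a b => b ≤ a)

/-- Fuelled version of the recursion
`B() = {1}`, `B(k_1,…,k_N) = sh(B(k_1,…,k_{N−1})) ∪ f_0·B(sorted(k_1,…,k_N − 1))`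
(dropping zero entries), where a tuple `k_1 ≤ ⋯ ≤ k_N` is represented by the
*nonincreasing* list `[k_N, …, k_1]`.  The fuel `l.sum + l.length` always suffices. -/
noncomputable def BsetAux : ℕ → List ℕ → Set (ℕ →₀ ℕ)
  | 0, _ => {0}
  | _ + 1, [] => {0}
  | fuel + 1, 0 :: ks => BsetAux fuel ks
  | fuel + 1, (k + 1) :: ks =>
      shMon '' BsetAux fuel ks ∪
        (fun v => Finsupp.single 0 1 + v) '' BsetAux fuel (sortDesc (k :: ks))

/-- The set of monomials `B(k_1,…,k_N)` (the list is the nonincreasing list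
`[k_N,…,k_1]`). -/
noncomputable def Bset (l : List ℕ) : Set (ℕ →₀ ℕ) :=
  BsetAux (l.sum + l.length) l

lemma sortDesc_perm (l : List ℕ) : (sortDesc l).Perm l := List.perm_insertionSort _ l

lemma sortDesc_sum_add_length (l : List ℕ) :
    (sortDesc l).sum + (sortDesc l).length = l.sum + l.length := by
  rw [(sortDesc_perm l).sum_eq, (sortDesc_perm l).length_eq]

lemma shMon_injective : Function.Injective shMon :=
  Finsupp.mapDomain_injective (add_left_injective 1)

lemma shMon_apply_zero (v : ℕ →₀ ℕ) : shMon v 0 = 0 :=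
  Finsupp.mapDomain_of_notMem_range _ _ (by simp)

lemma disjoint_image_shMon_image_single_zero_add (S T : Set (ℕ →₀ ℕ)) :
    Disjoint (shMon '' S) ((fun v => Finsupp.single 0 1 + v) '' T) := by
  rw [Set.disjoint_left]
  rintro _ ⟨u, -, rfl⟩ ⟨v, -, hv⟩
  have h0 := DFunLike.congr_fun hv 0
  simp [shMon_apply_zero] at h0

lemma BsetAux_congr {m n : ℕ} {l : List ℕ} (hm : l.sum + l.length ≤ m)
    (hn : l.sum + l.length ≤ n) : BsetAux m l = BsetAux n l := by
  induction m generalizing n l with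
  | zero =>
    cases l with
    | nil => cases n <;> rfl
    | cons => simp at hm
  | succ m ih =>
    obtain _ | ⟨k, ks⟩ := l
    · cases n <;> rfl
    simp only [List.sum_cons, List.length_cons] at hm hn
    obtain _ | n := n
    · omega
    cases k with
    | zero => exact ih (by omega) (by omega)
    | succ k =>
      have hsort := sortDesc_sum_add_length (k :: ks)
      simp only [List.sum_cons, List.length_cons] at hsort
      simp only [BsetAux]
      rw [ih (n := n) (l := ks) (by omega) (by omega),
        ih (n := n) (l := sortDesc (k :: ks)) (by omega) (by omega)]

lemma Bset_nil : Bset [] = {0} := rfl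

lemma Bset_zero_cons (ks : List ℕ) : Bset (0 :: ks) = Bset ks := by
  rw [Bset, show (0 :: ks).sum + (0 :: ks).length = (ks.sum + ks.length) + 1 by simp; omega]
  rfl

lemma Bset_succ_cons (k : ℕ) (ks : List ℕ) :
    Bset ((k + 1) :: ks) =
      shMon '' Bset ks ∪ (fun v => Finsupp.single 0 1 + v) '' Bset (sortDesc (k :: ks)) := by
  have hsort := sortDesc_sum_add_length (k :: ks)
  simp only [List.sum_cons, List.length_cons] at hsort
  rw [Bset, show ((k + 1) :: ks).sum + ((k + 1) :: ks).length = (ks.sum + ks.length + k + 1) + 1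
    by simp; omega]
  simp only [BsetAux]
  rw [BsetAux_congr (l := ks) (by omega) le_rfl,
    BsetAux_congr (l := sortDesc (k :: ks)) (by omega) le_rfl]
  rfl

theorem encard_Bset (l : List ℕ) : (Bset l).encard = ((l.map (· + 1)).prod : ℕ) :=
  match l with
  | [] => by simp [Bset_nil]
  | 0 :: ks => by rw [Bset_zero_cons, encard_Bset ks]; simp
  | (k + 1) :: ks => by
    rw [Bset_succ_cons, Set.encard_union_eq (disjoint_image_shMon_image_single_zero_add _ _),
      shMon_injective.encard_image, (add_right_injective _).encard_image,
      encard_Bset ks, encard_Bset (sortDesc (k :: ks)),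
      ((sortDesc_perm (k :: ks)).map _).prod_eq]
    push_cast [List.map_cons, List.prod_cons]
    ring
termination_by l.sum + l.length
decreasing_by
  all_goals simp only [sortDesc_sum_add_length, List.sum_cons, List.length_cons]; omega

theorem Bset_disjoint_card_general (l : List ℕ) :
    (∀ k ks, l = (k + 1) :: ks →
      Disjoint (shMon '' Bset ks)
        ((fun v => Finsupp.single 0 1 + v) '' Bset (sortDesc (k :: ks)))) ∧
    Nat.card (Bset l) = (l.map (· + 1)).prod := by
  refine ⟨fun _ _ _ => disjoint_image_shMon_image_single_zero_add _ _, ?_⟩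
  rw [Nat.card_coe_set_eq, Set.ncard_def, encard_Bset, ENat.toNat_natCast]

/-- The union in the defining recursion of `B(k_1,…,k_N)` is disjoint (the monomials
coming from `sh` have `f_0`-exponent `0`, those from `f_0·B(…)` have `f_0`-exponent
`≥ 1`), and `|B(k_1,…,k_N)| = ∏_{i=1}^N (k_i + 1)`. -/
theorem Bset_disjoint_card (l : List ℕ) (hl : l.Pairwise (fun a b => b ≤ a)) :
    (∀ k ks, l = (k + 1) :: ks →
      Disjoint (shMon '' Bset ks)
        ((fun v => Finsupp.single 0 1 + v) '' Bset (sortDesc (k :: ks)))) ∧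
    Nat.card (Bset l) = (l.map (· + 1)).prod :=
  Bset_disjoint_card_general l
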